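/- arXiv:1811.06782 — 3 statements merged into one kernel-verified Lean document; each statement's English description precedes it below -/
import Mathlib

section
/- Conditional specification consistency (Besag/Hammersley–Clifford form): suppose for each site i in a finite set S, binary conditional probabilities satisfy logit P(Z_i = 1 | z^i) = α_i + Σ_{j≠i} β_{ij} z_j with β_{ij} = β_{ji}. Then these conditionals are the full conditionals of the joint distribution π(z) ∝ exp(Σ_i α_i z_i + Σ_{i<j} β_{ij} z_i z_j) on {0,1}^S. -/
noncomputable def lsig (x : ℝ) : ℝ := Real.exp x / (1 + Real.exp x)

def bval (b : Bool) : ℝ := if b then 1 else 0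

lemma sum_split_ne {n : ℕ} (i : Fin n) (g : Fin n → ℝ) :
    ∑ j ∈ Finset.univ.filter (fun j => j ≠ i), g j
      = (∑ j ∈ Finset.univ.filter (fun j => j < i), g j)
        + ∑ j ∈ Finset.univ.filter (fun j => i < j), g j := by
  rw [← Finset.sum_filter_add_sum_filter_not
      (Finset.univ.filter (fun j => j ≠ i)) (fun j => j < i)]
  congr 1
  · congr 1
    ext j
    simp only [Finset.mem_filter, Finset.mem_univ, true_and, and_iff_right_iff_imp]
    intro h; exact ne_of_lt h
  · congr 1
    ext j
    simp only [Finset.mem_filter, Finset.mem_univ, true_and]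
    constructor
    · rintro ⟨h1, h2⟩; exact lt_of_le_of_ne (not_lt.mp h2) (Ne.symm h1)
    · intro h; exact ⟨ne_of_gt h, not_lt.mpr (le_of_lt h)⟩

/-- Besag / Hammersley–Clifford consistency: the conditional laws
`logit P(Z_i = 1 | z^i) = α_i + Σ_{j ≠ i} β_{ij} z_j` with symmetric `β` are the full
conditionals of the joint Gibbs distribution
`π(z) ∝ exp(Σ_i α_i z_i + Σ_{i<j} β_{ij} z_i z_j)`. -/
theorem besag_consistency {n : ℕ}
    (α : Fin n → ℝ) (β : Fin n → Fin n → ℝ)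
    (hsym : ∀ i j, β i j = β j i) (hdiag : ∀ i, β i i = 0)
    (w : (Fin n → Bool) → ℝ)
    (hw : ∀ z, w z = Real.exp ((∑ i, α i * bval (z i)) +
      ∑ i, ∑ j ∈ Finset.univ.filter (fun j => i < j), β i j * bval (z i) * bval (z j)))
    (i : Fin n) (z : Fin n → Bool) :
    w (Function.update z i true) /
        (w (Function.update z i true) + w (Function.update z i false))
      = lsig (α i + ∑ j ∈ Finset.univ.filter (fun j => j ≠ i), β i j * bval (z j)) := by
  set u := Function.update z i true with hu
  set v := Function.update z i false with hv
  have hui : u i = true := Function.update_self i true z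
  have hvi : v i = false := Function.update_self i false z
  have hun : ∀ k, k ≠ i → u k = z k := fun k hk => Function.update_of_ne hk _ _
  have hvn : ∀ k, k ≠ i → v k = z k := fun k hk => Function.update_of_ne hk _ _
  set S := ∑ j ∈ Finset.univ.filter (fun j => j ≠ i), β i j * bval (z j) with hS
  set Eu := (∑ k, α k * bval (u k)) +
      ∑ k, ∑ j ∈ Finset.univ.filter (fun j => k < j), β k j * bval (u k) * bval (u j) with hEu
  set Ev := (∑ k, α k * bval (v k)) +
      ∑ k, ∑ j ∈ Finset.univ.filter (fun j => k < j), β k j * bval (v k) * bval (v j) with hEv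
  -- linear part difference
  have h1 : (∑ k, α k * bval (u k)) - (∑ k, α k * bval (v k)) = α i := by
    rw [← Finset.sum_sub_distrib, Finset.sum_eq_single i]
    · rw [hui, hvi]; simp [bval]
    · intro k _ hk
      rw [hun k hk, hvn k hk]; ring
    · intro h; exact absurd (Finset.mem_univ i) h
  -- quadratic part difference
  have h2 : (∑ k, ∑ j ∈ Finset.univ.filter (fun j => k < j), β k j * bval (u k) * bval (u j))
      - (∑ k, ∑ j ∈ Finset.univ.filter (fun j => k < j), β k j * bval (v k) * bval (v j))
      = S := by
    rw [← Finset.sum_sub_distrib]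
    simp_rw [← Finset.sum_sub_distrib]
    set F : Fin n → ℝ := fun k => ∑ j ∈ Finset.univ.filter (fun j => k < j),
      (β k j * bval (u k) * bval (u j) - β k j * bval (v k) * bval (v j)) with hF
    have hFi : F i = ∑ j ∈ Finset.univ.filter (fun j => i < j), β i j * bval (z j) := by
      apply Finset.sum_congr rfl
      intro j hj
      have hji : j ≠ i := by
        simp only [Finset.mem_filter, Finset.mem_univ, true_and] at hj
        exact ne_of_gt hj
      rw [hui, hvi, hun j hji, hvn j hji]
      simp [bval]
    have hFlt : ∀ k, k < i → F k = β k i * bval (z k) := by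
      intro k hk
      have hki : k ≠ i := ne_of_lt hk
      simp only [hF]
      rw [Finset.sum_eq_single_of_mem i (by simp [hk])]
      · rw [hui, hvi, hun k hki, hvn k hki]; simp [bval]
      · intro j hj hji
        rw [hun j hji, hvn j hji, hun k hki, hvn k hki]; ring
    have hFgt : ∀ k, i < k → F k = 0 := by
      intro k hk
      apply Finset.sum_eq_zero
      intro j hj
      have hkj : k < j := by
        simp only [Finset.mem_filter, Finset.mem_univ, true_and] at hj
        exact hj
      have hki : k ≠ i := ne_of_gt hk
      have hji : j ≠ i := ne_of_gt (lt_trans hk hkj)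
      rw [hun j hji, hvn j hji, hun k hki, hvn k hki]; ring
    have hsplit : ∑ k, F k = F i + ∑ k ∈ Finset.univ.filter (fun k => k ≠ i), F k := by
      rw [Finset.filter_ne' Finset.univ i]
      exact (Finset.add_sum_erase Finset.univ F (Finset.mem_univ i)).symm
    rw [hsplit, hFi, sum_split_ne i F]
    have hgt0 : ∑ k ∈ Finset.univ.filter (fun k => i < k), F k = 0 :=
      Finset.sum_eq_zero fun k hk => hFgt k (by
        simp only [Finset.mem_filter, Finset.mem_univ, true_and] at hk; exact hk)
    have hlt : ∑ k ∈ Finset.univ.filter (fun k => k < i), F k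
        = ∑ k ∈ Finset.univ.filter (fun k => k < i), β i k * bval (z k) := by
      apply Finset.sum_congr rfl
      intro k hk
      simp only [Finset.mem_filter, Finset.mem_univ, true_and] at hk
      rw [hFlt k hk, hsym k i]
    rw [hgt0, hlt, hS, sum_split_ne i (fun j => β i j * bval (z j))]
    ring
  have hdiff : Eu = Ev + (α i + S) := by
    rw [hEu, hEv]; linarith [h1, h2]
  have hwu : w u = Real.exp Eu := hw u
  have hwv : w v = Real.exp Ev := hw v
  rw [hwu, hwv, hdiff, Real.exp_add, lsig]
  have hpv : (0:ℝ) < Real.exp Ev := Real.exp_pos _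
  have hps : (0:ℝ) < Real.exp (α i + S) := Real.exp_pos _
  rw [div_eq_div_iff (by positivity) (by positivity)]
  ring
end

section
/- The joint conditional law of the centered spatio-temporal autologistic field can be written in Gibbs form: given the past y = Z_{t-1} ∈ {0,1}^n and covariates, the distribution π_t(z) ∝ exp(Σ_i Φ_i(z_i) + Σ_{{i,j}: j∈N_i} ρ_1 z_i z_j) with Φ_i(z_i) = z_i (X_{i,t}ᵀβ - ρ_1 Σ_{j∈N_i} σ(X_{j,t}ᵀβ + ρ_2 y_j) + ρ_2 y_i) has full conditionals logit π_t(z_i=1 | z^i) = X_{i,t}ᵀβ + ρ_1 Σ_{j∈N_i}(z_j - σ(X_{j,t}ᵀβ + ρ_2 y_j)) + ρ_2 y_i, matching the model specification. -/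
/-- The conditional joint law of the centered spatio-temporal autologistic field, written in
Gibbs form with singleton potentials
`Φ_i(z_i) = z_i (X_{i,t}ᵀβ - ρ₁ Σ_{j∈N_i} σ(X_{j,t}ᵀβ + ρ₂ y_j) + ρ₂ y_i)` and pairwise
potentials `ρ₁ z_i z_j` for neighbors, has full conditionals
`logit π_t(z_i = 1 | z^i) = X_{i,t}ᵀβ + ρ₁ Σ_{j∈N_i}(z_j - σ(X_{j,t}ᵀβ + ρ₂ y_j)) + ρ₂ y_i`. -/
theorem centered_gibbs_full_conditional {S : Type*} [Fintype S] [DecidableEq S]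
    (N : S → Finset S) (hsym : ∀ i j, j ∈ N i ↔ i ∈ N j) (hirr : ∀ i, i ∉ N i)
    (Xβ : S → ℝ) (ρ₁ ρ₂ : ℝ) (y : S → Bool)
    (w : (S → Bool) → ℝ)
    (hw : ∀ z, w z = Real.exp
      ((∑ i, bval (z i) * (Xβ i - ρ₁ * (∑ j ∈ N i, lsig (Xβ j + ρ₂ * bval (y j)))
          + ρ₂ * bval (y i))) +
        (ρ₁ / 2) * ∑ i, ∑ j ∈ N i, bval (z i) * bval (z j)))
    (i : S) (z : S → Bool) :
    Real.log (w (Function.update z i true) / w (Function.update z i false))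
      = Xβ i + ρ₁ * (∑ j ∈ N i, (bval (z j) - lsig (Xβ j + ρ₂ * bval (y j)))) +
        ρ₂ * bval (y i) := by
  classical
  rw [hw, hw, ← Real.exp_sub, Real.log_exp]
  set c : S → ℝ := fun k => Xβ k - ρ₁ * (∑ j ∈ N k, lsig (Xβ j + ρ₂ * bval (y j)))
      + ρ₂ * bval (y k) with hc
  have hA : (∑ k, bval (Function.update z i true k) * c k)
      - (∑ k, bval (Function.update z i false k) * c k) = c i := by
    rw [← Finset.sum_sub_distrib, Finset.sum_eq_single i]
    · simp [bval]
    · intro k _ hk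
      simp [Function.update_of_ne hk]
    · simp
  have hP : (∑ k, ∑ j ∈ N k, bval (Function.update z i true k) * bval (Function.update z i true j))
      - (∑ k, ∑ j ∈ N k, bval (Function.update z i false k) * bval (Function.update z i false j))
      = 2 * ∑ j ∈ N i, bval (z j) := by
    rw [← Finset.sum_sub_distrib]
    have key : ∀ k,
        (∑ j ∈ N k, bval (Function.update z i true k) * bval (Function.update z i true j))
        - (∑ j ∈ N k, bval (Function.update z i false k) * bval (Function.update z i false j))
        = (if k = i then ∑ j ∈ N i, bval (z j) else 0)
          + (if i ∈ N k then bval (z k) else 0) := by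
      intro k
      by_cases hk : k = i
      · subst hk
        simp only [if_pos rfl, if_neg (hirr k), add_zero, Function.update_self]
        rw [← Finset.sum_sub_distrib]
        apply Finset.sum_congr rfl
        intro j hj
        have hji : j ≠ k := fun h => hirr k (h ▸ hj)
        simp [bval, Function.update_of_ne hji]
      · simp only [if_neg hk, zero_add, Function.update_of_ne hk]
        rw [← Finset.sum_sub_distrib]
        have hterm : ∀ j ∈ N k, bval (z k) * bval (Function.update z i true j)
            - bval (z k) * bval (Function.update z i false j)
            = if j = i then bval (z k) else 0 := by
          intro j hj
          by_cases hji : j = i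
          · subst hji; simp [bval]
          · simp [Function.update_of_ne hji, hji]
        rw [Finset.sum_congr rfl hterm, Finset.sum_ite_eq' (N k) i (fun _ => bval (z k))]
    rw [Finset.sum_congr rfl (fun k _ => key k), Finset.sum_add_distrib]
    have h1 : (∑ x, if x = i then (∑ j ∈ N i, bval (z j)) else 0) = ∑ j ∈ N i, bval (z j) := by
      simp
    have h2 : (∑ k, if i ∈ N k then bval (z k) else 0) = ∑ k ∈ N i, bval (z k) := by
      have : ∀ k, (if i ∈ N k then bval (z k) else 0) = (if k ∈ N i then bval (z k) else 0) := by
        intro k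
        by_cases h : i ∈ N k
        · rw [if_pos h, if_pos ((hsym i k).mpr h)]
        · rw [if_neg h, if_neg (fun h' => h ((hsym i k).mp h'))]
      rw [Finset.sum_congr rfl (fun k _ => this k)]
      simp [Finset.sum_ite_mem]
    rw [h1, h2, two_mul]
  rw [Finset.sum_sub_distrib]
  have hci : c i = Xβ i - ρ₁ * (∑ j ∈ N i, lsig (Xβ j + ρ₂ * bval (y j))) + ρ₂ * bval (y i) := rfl
  linear_combination hA + (ρ₁ / 2) * hP + hci
end

section
/- If the conditional distributions of a finite binary Markov random field satisfy the exponential-family form logit P(Z_i = z_i | z^i) with natural parameter functions A_i(z^i) = α_i + Σ_{j≠i} β_{ij} z_j, then the compatibility (symmetry) condition β_{ij} = β_{ji} for all i ≠ j is necessary for the existence of a joint distribution with these full conditionals. -/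
private lemma ratio_of_cond (p q x : ℝ) (hp : 0 < p) (hq : 0 < q)
    (h : p / (p + q) = lsig x) : p = Real.exp x * q := by
  have he : 0 < Real.exp x := Real.exp_pos x
  have hpq : p + q ≠ 0 := by positivity
  have h1 : (1 : ℝ) + Real.exp x ≠ 0 := by positivity
  rw [lsig, div_eq_div_iff hpq h1] at h
  nlinarith [h]

/-- Necessity of the symmetry condition: if a strictly positive joint distribution `π` on
`{0,1}^n` has full conditionals `P(Z_i = 1 | z^i) = σ(α_i + Σ_{j≠i} β_{ij} z_j)`, then
necessarily `β_{ij} = β_{ji}` for all `i ≠ j`. -/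
theorem symmetry_necessary {n : ℕ} (hn : 2 ≤ n)
    (α : Fin n → ℝ) (β : Fin n → Fin n → ℝ)
    (π : (Fin n → Bool) → ℝ)
    (hpos : ∀ z, 0 < π z)
    (hsum : ∑ z : Fin n → Bool, π z = 1)
    (hcond : ∀ (i : Fin n) (z : Fin n → Bool),
      π (Function.update z i true) /
          (π (Function.update z i true) + π (Function.update z i false))
        = lsig (α i + ∑ j ∈ Finset.univ.filter (fun j => j ≠ i), β i j * bval (z j))) :
    ∀ i j, i ≠ j → β i j = β j i := by
  intro i j hij
  set z0 : Fin n → Bool := fun _ => false with hz0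
  set z10 := Function.update z0 i true with hz10
  set z01 := Function.update z0 j true with hz01
  set z11 := Function.update z01 i true with hz11
  -- sum evaluations
  have sum_zero : ∀ k : Fin n,
      ∑ l ∈ Finset.univ.filter (fun l => l ≠ k), β k l * bval (z0 l) = 0 := by
    intro k; simp [bval, hz0]
  have sum_one : ∀ (k m : Fin n), m ≠ k →
      ∑ l ∈ Finset.univ.filter (fun l => l ≠ k),
        β k l * bval ((Function.update z0 m true) l) = β k m := by
    intro k m hmk
    rw [Finset.sum_eq_single m]
    · simp [Function.update_self, bval]
    · intro l hl hlm
      have : (Function.update z0 m true) l = false := by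
        simp [Function.update_of_ne hlm, hz0]
      simp [this, bval]
    · intro h
      exact absurd (Finset.mem_filter.mpr ⟨Finset.mem_univ m, hmk⟩) h
  -- four ratio facts
  have h1 : π z10 = Real.exp (α i) * π z0 := by
    have h := hcond i z0
    rw [sum_zero i, add_zero] at h
    have hfix : Function.update z0 i false = z0 := by
      funext l; by_cases hl : l = i <;> simp [Function.update, hl, hz0]
    rw [hfix] at h
    exact ratio_of_cond _ _ _ (hpos _) (hpos _) h
  have h2 : π z01 = Real.exp (α j) * π z0 := by
    have h := hcond j z0
    rw [sum_zero j, add_zero] at h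
    have hfix : Function.update z0 j false = z0 := by
      funext l; by_cases hl : l = j <;> simp [Function.update, hl, hz0]
    rw [hfix] at h
    exact ratio_of_cond _ _ _ (hpos _) (hpos _) h
  have h3 : π z11 = Real.exp (α i + β i j) * π z01 := by
    have h := hcond i z01
    rw [sum_one i j (Ne.symm hij)] at h
    have hfix : Function.update z01 i false = z01 := by
      funext l; by_cases hl : l = i
      · subst hl; simp [hz01, Function.update_of_ne hij, hz0]
      · simp [Function.update_of_ne hl]
    rw [hfix] at h
    exact ratio_of_cond _ _ _ (hpos _) (hpos _) h
  have h4 : π z11 = Real.exp (α j + β j i) * π z10 := by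
    have h := hcond j z10
    rw [sum_one j i hij] at h
    have hcomm : Function.update z10 j true = z11 := by
      rw [hz11, hz01, hz10, Function.update_comm hij]
    have hfix : Function.update z10 j false = z10 := by
      funext l; by_cases hl : l = j
      · subst hl; simp [hz10, Function.update_of_ne (Ne.symm hij), hz0]
      · simp [Function.update_of_ne hl]
    rw [hcomm, hfix] at h
    exact ratio_of_cond _ _ _ (hpos _) (hpos _) h
  have hz0pos := hpos z0
  have key : Real.exp (α i + β i j) * Real.exp (α j) =
      Real.exp (α j + β j i) * Real.exp (α i) := by
    have : Real.exp (α i + β i j) * (Real.exp (α j) * π z0) =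
        Real.exp (α j + β j i) * (Real.exp (α i) * π z0) := by
      rw [← h2, ← h1, ← h3, ← h4]
    have := mul_right_cancel₀ (ne_of_gt hz0pos)
      (by linarith [this] : Real.exp (α i + β i j) * Real.exp (α j) * π z0 =
        Real.exp (α j + β j i) * Real.exp (α i) * π z0)
    exact this
  rw [← Real.exp_add, ← Real.exp_add] at key
  have heq := Real.exp_injective key
  linarith
end
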